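/- Let M be a Hölder continuous function on Σ_A taking values in the set of d×d matrices with all entries positive, and fix q ∈ ℝ. Then there exists a constant C ≥ 1 such that for all n ≥ 1, all I ∈ Σ_{A,n} and all x ∈ [I]: ‖M(x)M(σx)⋯M(σ^{n−1}x)‖^q ≤ s_n(I,q) ≤ C · ‖M(x)M(σx)⋯M(σ^{n−1}x)‖^q, where s_n(I,q) = sup_{y∈[I]} ‖M(y)M(σy)⋯M(σ^{n−1}y)‖^q. -/
import Mathlib


open Filter MeasureTheory
open scoped Classical BigOperators Topology ENNReal

/-- The left shift on `Σ = {1,…,m}^ℕ`, modelled as `ℕ → Fin m`. -/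
def shift {m : ℕ} (x : ℕ → Fin m) : ℕ → Fin m := fun k => x (k + 1)

/-- The subshift of finite type `Σ_A` determined by a 0-1 matrix `A`. -/
def SigmaA {m : ℕ} (A : Matrix (Fin m) (Fin m) ℕ) : Set (ℕ → Fin m) :=
  {x | ∀ k : ℕ, A (x k) (x (k + 1)) = 1}

/-- Admissibility of a word `J ∈ Σ_{A,n}` (a word of length `n` over `{1,…,m}`). -/
def Adm {m : ℕ} (A : Matrix (Fin m) (Fin m) ℕ) {n : ℕ} (J : Fin n → Fin m) : Prop :=
  ∀ (i : ℕ) (h : i + 1 < n), A (J ⟨i, Nat.lt_of_succ_lt h⟩) (J ⟨i + 1, h⟩) = 1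

/-- The (finite) set `Σ_{A,n}` of admissible words of length `n`. -/
noncomputable def admWords {m : ℕ} (A : Matrix (Fin m) (Fin m) ℕ) (n : ℕ) :
    Finset (Fin n → Fin m) :=
  Finset.univ.filter fun J => Adm A J

/-- The cylinder set `[J] ⊆ Σ_A` of a word `J`. -/
def cylinder {m : ℕ} (A : Matrix (Fin m) (Fin m) ℕ) {n : ℕ} (J : Fin n → Fin m) :
    Set (ℕ → Fin m) :=
  {x | x ∈ SigmaA A ∧ ∀ i : Fin n, x (i : ℕ) = J i}

/-- `‖B‖ = 1ᵗ B 1`, the sum of all entries of `B`. -/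
def matNorm {d : ℕ} (B : Matrix (Fin d) (Fin d) ℝ) : ℝ := ∑ i, ∑ j, B i j

/-- The product `M(x) M(σx) ⋯ M(σ^{n-1}x)`. -/
noncomputable def Mprod {m d : ℕ} (M : (ℕ → Fin m) → Matrix (Fin d) (Fin d) ℝ)
    (x : ℕ → Fin m) (n : ℕ) : Matrix (Fin d) (Fin d) ℝ :=
  (((List.range n).map fun i => M (shift^[i] x))).prod

/-- `s_n(J,q) = sup_{x ∈ [J]} ‖M(x)⋯M(σ^{n-1}x)‖^q`. -/
noncomputable def sWord {m d : ℕ} (A : Matrix (Fin m) (Fin m) ℕ)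
    (M : (ℕ → Fin m) → Matrix (Fin d) (Fin d) ℝ) (q : ℝ) {n : ℕ} (J : Fin n → Fin m) : ℝ :=
  sSup ((fun x => matNorm (Mprod M x n) ^ q) '' cylinder A J)

/-- `s_n(q) = Σ_{J ∈ Σ_{A,n}} s_n(J,q)`. -/
noncomputable def sSum {m d : ℕ} (A : Matrix (Fin m) (Fin m) ℕ)
    (M : (ℕ → Fin m) → Matrix (Fin d) (Fin d) ℝ) (q : ℝ) (n : ℕ) : ℝ :=
  ∑ J ∈ admWords A n, sWord A M q J

/-- `M` is Hölder continuous on `Σ_A` with respect to the metric `d(x,y) = m^{-n(x,y)}`: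
entrywise, `|M(x)_{ij} - M(y)_{ij}| ≤ C (m^{-α})^n` whenever `x, y` agree on the first
`n` coordinates. -/
def HolderM {m d : ℕ} (A : Matrix (Fin m) (Fin m) ℕ)
    (M : (ℕ → Fin m) → Matrix (Fin d) (Fin d) ℝ) : Prop :=
  ∃ C > (0:ℝ), ∃ a : ℝ, 0 < a ∧ a < 1 ∧
    ∀ x ∈ SigmaA A, ∀ y ∈ SigmaA A, ∀ n : ℕ, (∀ k < n, x k = y k) →
      ∀ i j, |M x i j - M y i j| ≤ C * a ^ n

/-- `A` is a 0-1 matrix. -/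
def ZeroOne {m : ℕ} (A : Matrix (Fin m) (Fin m) ℕ) : Prop :=
  ∀ i j, A i j = 0 ∨ A i j = 1

/-- `A` is primitive: some power of `A` has all entries positive. -/
def Primitive {m : ℕ} (A : Matrix (Fin m) (Fin m) ℕ) : Prop :=
  ∃ p : ℕ, 1 ≤ p ∧ ∀ i j, 0 < (A ^ p) i j

/-- `M` takes values in the positive `d × d` matrices (on `Σ_A`). -/
def PosM {m d : ℕ} (A : Matrix (Fin m) (Fin m) ℕ)
    (M : (ℕ → Fin m) → Matrix (Fin d) (Fin d) ℝ) : Prop :=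
  ∀ x ∈ SigmaA A, ∀ i j, 0 < M x i j

section Aux
variable {m d : ℕ} {A : Matrix (Fin m) (Fin m) ℕ}
  {M : (ℕ → Fin m) → Matrix (Fin d) (Fin d) ℝ}

lemma shift_mem {x : ℕ → Fin m} (hx : x ∈ SigmaA A) : shift x ∈ SigmaA A :=
  fun k => hx (k + 1)

lemma Mprod_succ (M : (ℕ → Fin m) → Matrix (Fin d) (Fin d) ℝ) (x : ℕ → Fin m) (n : ℕ) :
    Mprod M x (n + 1) = M x * Mprod M (shift x) n := by
  unfold Mprod
  rw [List.range_succ_eq_map, List.map_cons, List.prod_cons, List.map_map]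
  have h : ((fun i => M (shift^[i] x)) ∘ Nat.succ) = fun i => M (shift^[i] (shift x)) := by
    funext i
    simp [Function.comp_def, Function.iterate_succ_apply]
  rw [h]
  simp

lemma Mprod_nonneg (hpos : PosM A M) :
    ∀ n, ∀ x ∈ SigmaA A, ∀ i j, 0 ≤ Mprod M x n i j := by
  intro n
  induction n with
  | zero =>
    intro x hx i j
    simp only [Mprod, List.range_zero, List.map_nil, List.prod_nil]
    rw [Matrix.one_apply]
    split <;> norm_num
  | succ n ih =>
    intro x hx i j
    rw [Mprod_succ, Matrix.mul_apply]
    exact Finset.sum_nonneg fun k _ =>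
      mul_nonneg (hpos x hx i k).le (ih (shift x) (shift_mem hx) k j)

lemma Mprod_diag_pos (hpos : PosM A M) :
    ∀ n, ∀ x ∈ SigmaA A, ∀ j, 0 < Mprod M x n j j := by
  intro n
  induction n with
  | zero =>
    intro x hx j
    simp only [Mprod, List.range_zero, List.map_nil, List.prod_nil]
    rw [Matrix.one_apply_eq]; norm_num
  | succ n ih =>
    intro x hx j
    rw [Mprod_succ, Matrix.mul_apply]
    refine Finset.sum_pos' (fun k _ =>
      mul_nonneg (hpos x hx j k).le (Mprod_nonneg hpos n (shift x) (shift_mem hx) k j))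
      ⟨j, Finset.mem_univ j, mul_pos (hpos x hx j j) (ih (shift x) (shift_mem hx) j)⟩

lemma matNorm_Mprod_pos (hd : 1 ≤ d) (hpos : PosM A M) (n : ℕ)
    {x : ℕ → Fin m} (hx : x ∈ SigmaA A) : 0 < matNorm (Mprod M x n) := by
  have j0 : Fin d := ⟨0, hd⟩
  unfold matNorm
  refine Finset.sum_pos' (fun i _ => Finset.sum_nonneg fun j _ =>
      Mprod_nonneg hpos n x hx i j) ⟨j0, Finset.mem_univ _, ?_⟩
  refine Finset.sum_pos' (fun j _ => Mprod_nonneg hpos n x hx j0 j)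
    ⟨j0, Finset.mem_univ _, Mprod_diag_pos hpos n x hx j0⟩

lemma Mprod_ratio (hpos : PosM A M)
    {C a ε : ℝ} (hC : 0 < C) (ha0 : 0 < a) (hε : 0 < ε)
    (hH : ∀ x ∈ SigmaA A, ∀ y ∈ SigmaA A, ∀ n : ℕ, (∀ k < n, x k = y k) →
      ∀ i j, |M x i j - M y i j| ≤ C * a ^ n)
    (hlow : ∀ y ∈ SigmaA A, ∀ i j, ε ≤ M y i j) :
    ∀ n, ∀ x ∈ SigmaA A, ∀ y ∈ SigmaA A, (∀ k < n, x k = y k) →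
      ∀ i j, Mprod M x n i j ≤
        (∏ k ∈ Finset.range n, (1 + (C / ε) * a ^ (k + 1))) * Mprod M y n i j := by
  intro n
  induction n with
  | zero =>
    intro x hx y hy _ i j
    simp [Mprod]
  | succ n ih =>
    intro x hx y hy hagree i j
    have hρ : 0 < C / ε := div_pos hC hε
    have hcn : 0 ≤ ∏ k ∈ Finset.range n, (1 + (C / ε) * a ^ (k + 1)) :=
      Finset.prod_nonneg fun k _ => by positivity
    rw [Mprod_succ, Mprod_succ, Matrix.mul_apply, Matrix.mul_apply,
      Finset.prod_range_succ, Finset.mul_sum]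
    refine Finset.sum_le_sum fun k _ => ?_
    have h1 : M x i k ≤ (1 + (C / ε) * a ^ (n + 1)) * M y i k := by
      have habs := hH x hx y hy (n + 1) hagree i k
      have h2 : M x i k ≤ M y i k + C * a ^ (n + 1) := by
        have := abs_le.mp habs
        linarith [this.2]
      have h3 : C * a ^ (n + 1) = (C / ε) * a ^ (n + 1) * ε := by
        field_simp
      have h4 : (C / ε) * a ^ (n + 1) * ε ≤ (C / ε) * a ^ (n + 1) * M y i k :=
        mul_le_mul_of_nonneg_left (hlow y hy i k) (by positivity)
      nlinarith
    have h2 : Mprod M (shift x) n k j ≤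
        (∏ l ∈ Finset.range n, (1 + (C / ε) * a ^ (l + 1))) * Mprod M (shift y) n k j := by
      refine ih (shift x) (shift_mem hx) (shift y) (shift_mem hy) ?_ k j
      intro l hl
      exact hagree (l + 1) (by omega)
    have hnn1 : 0 ≤ Mprod M (shift x) n k j :=
      Mprod_nonneg hpos n (shift x) (shift_mem hx) k j
    have hnn2 : 0 ≤ (1 + (C / ε) * a ^ (n + 1)) * M y i k := by
      have := hpos y hy i k; positivity
    calc M x i k * Mprod M (shift x) n k j
        ≤ ((1 + (C / ε) * a ^ (n + 1)) * M y i k) *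
          ((∏ l ∈ Finset.range n, (1 + (C / ε) * a ^ (l + 1))) * Mprod M (shift y) n k j) :=
          mul_le_mul h1 h2 hnn1 hnn2
      _ = (∏ l ∈ Finset.range n, (1 + (C / ε) * a ^ (l + 1))) * (1 + (C / ε) * a ^ (n + 1)) *
          (M y i k * Mprod M (shift y) n k j) := by ring

lemma prod_le_K {ρ a : ℝ} (hρ : 0 ≤ ρ) (ha0 : 0 ≤ a) (ha1 : a < 1) (n : ℕ) :
    (∏ k ∈ Finset.range n, (1 + ρ * a ^ (k + 1))) ≤ Real.exp (ρ * (1 / (1 - a))) := by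
  have hstep : ∀ k ∈ Finset.range n, (1 + ρ * a ^ (k + 1)) ≤ Real.exp (ρ * a ^ (k + 1)) := by
    intro k _
    have := Real.add_one_le_exp (ρ * a ^ (k + 1))
    linarith
  calc (∏ k ∈ Finset.range n, (1 + ρ * a ^ (k + 1)))
      ≤ ∏ k ∈ Finset.range n, Real.exp (ρ * a ^ (k + 1)) :=
        Finset.prod_le_prod (fun k _ => by positivity) hstep
    _ = Real.exp (∑ k ∈ Finset.range n, ρ * a ^ (k + 1)) := by
        rw [Real.exp_sum]
    _ ≤ Real.exp (ρ * (1 / (1 - a))) := by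
        apply Real.exp_le_exp.mpr
        have hsum : ∑ k ∈ Finset.range n, a ^ (k + 1) ≤ 1 / (1 - a) := by
          have hle : ∑ k ∈ Finset.range n, a ^ (k + 1) ≤ ∑ k ∈ Finset.range (n + 1), a ^ k := by
            rw [Finset.sum_range_succ' (fun k => a ^ k) n]
            simp only [pow_zero]
            nlinarith [Finset.sum_nonneg (fun k (_ : k ∈ Finset.range n) => pow_nonneg ha0 (k+1))]
          have hgeo : ∑ k ∈ Finset.range (n + 1), a ^ k ≤ 1 / (1 - a) := by
            rw [geom_sum_eq (ne_of_lt ha1)]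
            have h1a : (0:ℝ) < 1 - a := by linarith
            have heq : (a ^ (n + 1) - 1) / (a - 1) = (1 - a ^ (n + 1)) / (1 - a) := by
              rw [div_eq_div_iff (by linarith) (by linarith)]
              ring
            rw [heq]
            have hpow : 0 ≤ a ^ (n + 1) := pow_nonneg ha0 _
            gcongr
            linarith
          linarith
        calc ∑ k ∈ Finset.range n, ρ * a ^ (k + 1)
            = ρ * ∑ k ∈ Finset.range n, a ^ (k + 1) := by rw [Finset.mul_sum]
          _ ≤ ρ * (1 / (1 - a)) := mul_le_mul_of_nonneg_left hsum hρ

lemma rpow_ratio {u v K q : ℝ} (hu : 0 < u) (hv : 0 < v) (hK : 1 ≤ K)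
    (h1 : u ≤ K * v) (h2 : v ≤ K * u) : u ^ q ≤ K ^ |q| * v ^ q := by
  have hK0 : 0 < K := lt_of_lt_of_le one_pos hK
  rcases le_or_gt 0 q with hq | hq
  · rw [abs_of_nonneg hq]
    calc u ^ q ≤ (K * v) ^ q := Real.rpow_le_rpow hu.le h1 hq
      _ = K ^ q * v ^ q := Real.mul_rpow hK0.le hv.le
  · rw [abs_of_neg hq]
    have hdiv : v / K ≤ u := by
      rw [div_le_iff₀ hK0]
      linarith [h2, mul_comm K u]
    have hvK : 0 < v / K := div_pos hv hK0
    calc u ^ q ≤ (v / K) ^ q := Real.rpow_le_rpow_of_nonpos hvK hdiv hq.le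
      _ = v ^ q / K ^ q := Real.div_rpow hv.le hK0.le q
      _ = K ^ (-q) * v ^ q := by
          rw [Real.rpow_neg hK0.le]
          field_simp

lemma sigmaA_isClosed : IsClosed (SigmaA A) := by
  have h : SigmaA A = ⋂ k : ℕ, {x : ℕ → Fin m | A (x k) (x (k + 1)) = 1} := by
    ext x; simp [SigmaA, Set.mem_iInter]
  rw [h]
  refine isClosed_iInter fun k => ?_
  have h2 : {x : ℕ → Fin m | A (x k) (x (k + 1)) = 1} =
      (fun x : ℕ → Fin m => (x k, x (k + 1))) ⁻¹' {p : Fin m × Fin m | A p.1 p.2 = 1} := rfl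
  rw [h2]
  exact IsClosed.preimage ((continuous_apply k).prodMk (continuous_apply (k + 1)))
    (isClosed_discrete _)

lemma entry_contOn {C a : ℝ} (hC : 0 < C) (ha0 : 0 < a) (ha1 : a < 1)
    (hH : ∀ x ∈ SigmaA A, ∀ y ∈ SigmaA A, ∀ n : ℕ, (∀ k < n, x k = y k) →
      ∀ i j, |M x i j - M y i j| ≤ C * a ^ n)
    (i j : Fin d) : ContinuousOn (fun x => M x i j) (SigmaA A) := by
  intro x hx
  rw [ContinuousWithinAt, Metric.tendsto_nhds]
  intro δ hδ
  obtain ⟨n, hn⟩ : ∃ n : ℕ, a ^ n < δ / C := exists_pow_lt_of_lt_one (by positivity) ha1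
  rw [eventually_nhdsWithin_iff]
  have hV : {y : ℕ → Fin m | ∀ k < n, y k = x k} ∈ 𝓝 x := by
    have heq : {y : ℕ → Fin m | ∀ k < n, y k = x k} =
        ⋂ k ∈ Finset.range n, (fun y : ℕ → Fin m => y k) ⁻¹' {x k} := by
      ext y; simp [Finset.mem_range]
    rw [heq]
    refine (Filter.biInter_finset_mem _).mpr fun k _ => ?_
    exact (continuous_apply k).continuousAt.preimage_mem_nhds
      ((isOpen_discrete {x k}).mem_nhds rfl)
  filter_upwards [hV] with y hy hyA
  have hb := hH y hyA x hx n hy i j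
  rw [Real.dist_eq]
  calc |M y i j - M x i j| ≤ C * a ^ n := hb
    _ < C * (δ / C) := by
        exact mul_lt_mul_of_pos_left hn hC
    _ = δ := by field_simp

end Aux

/-- Lemma 2.2: `s_n(I,q) ≈ ‖M(x)⋯M(σ^{n-1}x)‖^q` uniformly for `x ∈ [I]`. -/
theorem sWord_approx
    (m d : ℕ) (hm : 2 ≤ m) (hd : 1 ≤ d)
    (A : Matrix (Fin m) (Fin m) ℕ) (hA01 : ZeroOne A) (hAprim : Primitive A)
    (M : (ℕ → Fin m) → Matrix (Fin d) (Fin d) ℝ)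
    (hpos : PosM A M) (hHolder : HolderM A M) (q : ℝ) :
    ∃ C : ℝ, 1 ≤ C ∧ ∀ n : ℕ, 1 ≤ n → ∀ I : Fin n → Fin m, Adm A I → ∀ x ∈ cylinder A I,
      matNorm (Mprod M x n) ^ q ≤ sWord A M q I ∧
      sWord A M q I ≤ C * matNorm (Mprod M x n) ^ q := by
  obtain ⟨C0, hC0, a, ha0, ha1, hH⟩ := hHolder
  by_cases hne : (SigmaA A).Nonempty
  swap
  · refine ⟨1, le_refl 1, fun n hn I hI x hx => absurd ⟨x, hx.1⟩ hne⟩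
  -- uniform lower bound on entries of M over Σ_A
  have hcomp : IsCompact (SigmaA A) := sigmaA_isClosed.isCompact
  have hεij : ∀ i j : Fin d, ∃ ε : ℝ, 0 < ε ∧ ∀ y ∈ SigmaA A, ε ≤ M y i j := by
    intro i j
    obtain ⟨x₀, hx₀, hmin⟩ := hcomp.exists_isMinOn hne (entry_contOn hC0 ha0 ha1 hH i j)
    exact ⟨M x₀ i j, hpos x₀ hx₀ i j, fun y hy => hmin hy⟩
  choose εf hεfpos hεfle using hεij
  have hdne : Nonempty (Fin d) := ⟨⟨0, hd⟩⟩
  have huniv : (Finset.univ : Finset (Fin d × Fin d)).Nonempty := Finset.univ_nonempty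
  set ε := Finset.univ.inf' huniv (fun p : Fin d × Fin d => εf p.1 p.2) with hεdef
  have hεpos : 0 < ε := by
    rw [hεdef, Finset.lt_inf'_iff]
    exact fun p _ => hεfpos p.1 p.2
  have hlow : ∀ y ∈ SigmaA A, ∀ i j, ε ≤ M y i j := by
    intro y hy i j
    exact le_trans (Finset.inf'_le _ (Finset.mem_univ (i, j))) (hεfle i j y hy)
  set K := Real.exp ((C0 / ε) * (1 / (1 - a))) with hKdef
  have hK1 : 1 ≤ K := by
    have h1a : (0:ℝ) < 1 - a := by linarith
    exact Real.one_le_exp (by positivity)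
  set Cq := max 1 (K ^ |q|) with hCqdef
  refine ⟨Cq, le_max_left _ _, ?_⟩
  intro n hn I hI x hx
  -- any two points of the cylinder agree on the first n coordinates
  have hagree : ∀ y ∈ cylinder A I, ∀ z ∈ cylinder A I, ∀ k < n, y k = z k := by
    intro y hy z hz k hk
    rw [hy.2 ⟨k, hk⟩, hz.2 ⟨k, hk⟩]
  have hratio : ∀ y ∈ cylinder A I, ∀ z ∈ cylinder A I,
      matNorm (Mprod M y n) ≤ K * matNorm (Mprod M z n) := by
    intro y hy z hz
    have hent := Mprod_ratio hpos hC0 ha0 hεpos hH hlow n y hy.1 z hz.1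
      (hagree y hy z hz)
    have hcK : (∏ k ∈ Finset.range n, (1 + (C0 / ε) * a ^ (k + 1))) ≤ K :=
      prod_le_K (by positivity) ha0.le ha1 n
    unfold matNorm
    calc ∑ i, ∑ j, Mprod M y n i j
        ≤ ∑ i, ∑ j, K * Mprod M z n i j := by
          refine Finset.sum_le_sum fun i _ => Finset.sum_le_sum fun j _ => ?_
          refine le_trans (hent i j) ?_
          exact mul_le_mul_of_nonneg_right hcK (Mprod_nonneg hpos n z hz.1 i j)
      _ = K * ∑ i, ∑ j, Mprod M z n i j := by
          simp [Finset.mul_sum]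
  have hq : ∀ y ∈ cylinder A I,
      matNorm (Mprod M y n) ^ q ≤ Cq * matNorm (Mprod M x n) ^ q := by
    intro y hy
    have h1 := hratio y hy x hx
    have h2 := hratio x hx y hy
    have hu := matNorm_Mprod_pos hd hpos n hy.1
    have hv := matNorm_Mprod_pos hd hpos n hx.1
    calc matNorm (Mprod M y n) ^ q
        ≤ K ^ |q| * matNorm (Mprod M x n) ^ q := rpow_ratio hu hv hK1 h1 h2
      _ ≤ Cq * matNorm (Mprod M x n) ^ q :=
          mul_le_mul_of_nonneg_right (le_max_right _ _) (Real.rpow_nonneg hv.le q)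
  constructor
  · refine le_csSup ⟨Cq * matNorm (Mprod M x n) ^ q, ?_⟩ ⟨x, hx, rfl⟩
    rintro r ⟨y, hy, rfl⟩
    exact hq y hy
  · refine csSup_le ⟨_, ⟨x, hx, rfl⟩⟩ ?_
    rintro r ⟨y, hy, rfl⟩
    exact hq y hy
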